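/- arXiv:1106.3936 — 3 statements merged into one kernel-verified Lean document; each statement's English description precedes it below -/
import Mathlib

section
/- Let a₁ := (r_min c_min / (r_max c_max))^{1/2}. Suppose Σ_{i=1}^{m⁻}|α_i^-| < a₁ and Σ_{i=1}^{m⁺}|α_i^+| < a₁, let λ > 0, and let u be a twice continuously differentiable function on [-1,1], not identically zero, satisfying −u'' = λ r u on (−1,1) together with the multi-point boundary conditions. Then u'(−1) ≠ 0, u'(1) ≠ 0, and u ∈ T_k for some integer k ≥ 1. -/
open Set Real Topology Filter

set_option maxHeartbeats 1600000

noncomputable section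

/-- `u` is twice continuously differentiable on `[-1,1]`, with first derivative `u'`
and second derivative `u''` there. -/
def C2I (u u' u'' : ℝ → ℝ) : Prop :=
  (∀ x ∈ Set.Icc (-1:ℝ) 1, HasDerivWithinAt u (u' x) (Set.Icc (-1:ℝ) 1) x) ∧
  (∀ x ∈ Set.Icc (-1:ℝ) 1, HasDerivWithinAt u' (u'' x) (Set.Icc (-1:ℝ) 1) x) ∧
  ContinuousOn u'' (Set.Icc (-1:ℝ) 1)

/-- `r` is continuously differentiable on `[-1,1]`, with derivative `r'` there. -/
def C1I (r r' : ℝ → ℝ) : Prop :=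
  (∀ x ∈ Set.Icc (-1:ℝ) 1, HasDerivWithinAt r (r' x) (Set.Icc (-1:ℝ) 1) x) ∧
  ContinuousOn r' (Set.Icc (-1:ℝ) 1)

/-- The nodal-shape conditions defining membership of the set `T_k^ν` (for `ν = 1` this is
`T_k^+`, for `ν = -1` it is `T_k^-`): (a) `u'(±1) ≠ 0` and `ν u'(-1) > 0`; (b) `u'` has only
simple zeros in `(-1,1)` and exactly `k` of them; (c) `u` has a zero strictly between each
pair of consecutive zeros of `u'`. -/
def InTk (k : ℕ) (ν : ℝ) (u u' u'' : ℝ → ℝ) : Prop :=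
  (u' (-1) ≠ 0 ∧ u' 1 ≠ 0 ∧ 0 < ν * u' (-1)) ∧
  ((∀ x ∈ Set.Ioo (-1:ℝ) 1, u' x = 0 → u'' x ≠ 0) ∧
    {x ∈ Set.Ioo (-1:ℝ) 1 | u' x = 0}.ncard = k) ∧
  (∀ a b : ℝ, a ∈ Set.Ioo (-1:ℝ) 1 → b ∈ Set.Ioo (-1:ℝ) 1 → u' a = 0 → u' b = 0 →
    a < b → (∀ c ∈ Set.Ioo a b, u' c ≠ 0) → ∃ c ∈ Set.Ioo a b, u c = 0)

lemma gronwall_aux {E E' : ℝ → ℝ} {K : ℝ}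
    (hE : ∀ x ∈ Set.Icc (-1:ℝ) 1, HasDerivWithinAt E (E' x) (Set.Icc (-1:ℝ) 1) x)
    (hle : ∀ x ∈ Set.Ioo (-1:ℝ) 1, E' x ≤ K * E x) :
    ∀ x ∈ Set.Icc (-1:ℝ) 1, ∀ y ∈ Set.Icc (-1:ℝ) 1, x ≤ y →
      E y ≤ E x * Real.exp (K * (y - x)) := by
  have hanti : AntitoneOn (fun z => E z * Real.exp (-K * z)) (Set.Icc (-1:ℝ) 1) := by
    apply antitoneOn_of_hasDerivWithinAt_nonpos (convex_Icc _ _)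
      (f' := fun z => E' z * Real.exp (-K * z) + E z * (Real.exp (-K * z) * (-K)))
    · exact ContinuousOn.mul (fun x hx => (hE x hx).continuousWithinAt)
        (Real.continuous_exp.comp (continuous_const.mul continuous_id)).continuousOn
    · intro x hx
      rw [interior_Icc] at hx
      have h1 : HasDerivWithinAt E (E' x) (Set.Ioo (-1:ℝ) 1) x :=
        (hE x (Set.Ioo_subset_Icc_self hx)).mono Set.Ioo_subset_Icc_self
      have h2 : HasDerivAt (fun z => Real.exp (-K * z)) (Real.exp (-K * x) * (-K)) x := by
        simpa using (HasDerivAt.exp ((hasDerivAt_id x).const_mul (-K)))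
      rw [interior_Icc]; exact h1.mul (h2.hasDerivWithinAt)
    · intro x hx
      rw [interior_Icc] at hx
      have h3 := hle x hx
      have h4 : (0:ℝ) < Real.exp (-K * x) := Real.exp_pos _
      nlinarith [mul_le_mul_of_nonneg_right h3 h4.le]
  intro x hx y hy hxy
  have := hanti hx hy hxy
  have h4 : (0:ℝ) < Real.exp (-K * y) := Real.exp_pos _
  have h5 : Real.exp (K * (y - x)) = Real.exp (-K * x) / Real.exp (-K * y) := by
    rw [← Real.exp_sub]; ring_nf
  rw [h5]
  simp only at this
  rw [div_eq_mul_inv, ← mul_assoc]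
  calc E y = E y * Real.exp (-K * y) * (Real.exp (-K * y))⁻¹ := by field_simp
    _ ≤ E x * Real.exp (-K * x) * (Real.exp (-K * y))⁻¹ := by
        apply mul_le_mul_of_nonneg_right this (by positivity)

lemma energy_cmp
    (r r' : ℝ → ℝ)
    (hr : (∀ x ∈ Set.Icc (-1:ℝ) 1, HasDerivWithinAt r (r' x) (Set.Icc (-1:ℝ) 1) x) ∧
      ContinuousOn r' (Set.Icc (-1:ℝ) 1))
    (hrpos : ∀ x ∈ Set.Icc (-1:ℝ) 1, 0 < r x)
    (rmin rmax Mp Mm cmin cmax : ℝ)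
    (hrmin : IsLeast (r '' Set.Icc (-1:ℝ) 1) rmin)
    (hrmax : IsGreatest (r '' Set.Icc (-1:ℝ) 1) rmax)
    (hMp : IsGreatest ((fun x => max (r' x) 0) '' Set.Icc (-1:ℝ) 1) Mp)
    (hMm : IsGreatest ((fun x => max (-(r' x)) 0) '' Set.Icc (-1:ℝ) 1) Mm)
    (hcmin : cmin = min (Real.exp (-(2 * Mp) / rmin)) (Real.exp (-(2 * Mm) / rmin)))
    (hcmax : cmax = cmin⁻¹)
    (l : ℝ) (hl : 0 < l)
    (u u' u'' : ℝ → ℝ)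
    (hu : (∀ x ∈ Set.Icc (-1:ℝ) 1, HasDerivWithinAt u (u' x) (Set.Icc (-1:ℝ) 1) x) ∧
      (∀ x ∈ Set.Icc (-1:ℝ) 1, HasDerivWithinAt u' (u'' x) (Set.Icc (-1:ℝ) 1) x) ∧
      ContinuousOn u'' (Set.Icc (-1:ℝ) 1))
    (hode : ∀ x ∈ Set.Ioo (-1:ℝ) 1, -(u'' x) = l * r x * u x) :
    ∀ x ∈ Set.Icc (-1:ℝ) 1, ∀ y ∈ Set.Icc (-1:ℝ) 1,
      (u' x * u' x + l * (r x * (u x * u x))) ≤ cmax * (u' y * u' y + l * (r y * (u y * u y))) := by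
  obtain ⟨⟨x₀, hx₀I, hx₀⟩, hrminub⟩ := hrmin
  have hrminpos : 0 < rmin := hx₀ ▸ hrpos x₀ hx₀I
  have hrminle : ∀ x ∈ Set.Icc (-1:ℝ) 1, rmin ≤ r x := fun x hx => hrminub ⟨x, hx, rfl⟩
  have hMp0 : 0 ≤ Mp := by obtain ⟨x, hx, he⟩ := hMp.1; rw [← he]; exact le_max_right _ _
  have hMm0 : 0 ≤ Mm := by obtain ⟨x, hx, he⟩ := hMm.1; rw [← he]; exact le_max_right _ _
  have hr'le : ∀ x ∈ Set.Icc (-1:ℝ) 1, r' x ≤ Mp :=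
    fun x hx => (le_max_left _ 0).trans (hMp.2 ⟨x, hx, rfl⟩)
  have hr'ge : ∀ x ∈ Set.Icc (-1:ℝ) 1, -Mm ≤ r' x := by
    intro x hx
    have := (le_max_left (-(r' x)) 0).trans (hMm.2 ⟨x, hx, rfl⟩)
    linarith
  have hcminpos : 0 < cmin := by rw [hcmin]; positivity
  set E : ℝ → ℝ := fun x => u' x * u' x + l * (r x * (u x * u x)) with hEdef
  set D : ℝ → ℝ := fun x => u'' x * u' x + u' x * u'' x +
    l * (r' x * (u x * u x) + r x * (u' x * u x + u x * u' x)) with hDdef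
  have hEnn : ∀ x ∈ Set.Icc (-1:ℝ) 1, 0 ≤ E x := by
    intro x hx
    have := hrpos x hx
    simp only [hEdef]
    nlinarith [mul_self_nonneg (u' x), mul_self_nonneg (u x),
      mul_nonneg (mul_nonneg hl.le this.le) (mul_self_nonneg (u x))]
  have hEderiv : ∀ x ∈ Set.Icc (-1:ℝ) 1, HasDerivWithinAt E (D x) (Set.Icc (-1:ℝ) 1) x := by
    intro x hx
    exact ((hu.2.1 x hx).mul (hu.2.1 x hx)).add
      (((hr.1 x hx).mul ((hu.1 x hx).mul (hu.1 x hx))).const_mul l)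
  have hDeq : ∀ x ∈ Set.Ioo (-1:ℝ) 1, D x = l * (r' x * (u x * u x)) := by
    intro x hx
    have h2 : u'' x = -(l * r x * u x) := by have := hode x hx; linarith
    simp only [hDdef, h2]; ring
  have hfwd : ∀ x ∈ Set.Icc (-1:ℝ) 1, ∀ y ∈ Set.Icc (-1:ℝ) 1, x ≤ y →
      E y ≤ E x * Real.exp ((Mp / rmin) * (y - x)) := by
    apply gronwall_aux hEderiv
    intro x hx
    rw [hDeq x hx, div_mul_eq_mul_div, le_div_iff₀ hrminpos]
    have h1 := hr'le x (Set.Ioo_subset_Icc_self hx)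
    have h2 := hrminle x (Set.Ioo_subset_Icc_self hx)
    have unn : (0:ℝ) ≤ u x * u x := mul_self_nonneg _
    have u'nn : (0:ℝ) ≤ u' x * u' x := mul_self_nonneg _
    simp only [hEdef]
    nlinarith [mul_le_mul_of_nonneg_right h1 (mul_nonneg (mul_nonneg hl.le unn) hrminpos.le),
      mul_le_mul_of_nonneg_left h2 (mul_nonneg hMp0 (mul_nonneg hl.le unn))]
  have hbwd : ∀ x ∈ Set.Icc (-1:ℝ) 1, ∀ y ∈ Set.Icc (-1:ℝ) 1, x ≤ y →
      E x ≤ E y * Real.exp ((Mm / rmin) * (y - x)) := by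
    have hmaps : Set.MapsTo (fun z : ℝ => -z) (Set.Icc (-1:ℝ) 1) (Set.Icc (-1:ℝ) 1) := by
      intro z hz; simp only [Set.mem_Icc] at *; constructor <;> linarith [hz.1, hz.2]
    have hmem : ∀ z : ℝ, z ∈ Set.Icc (-1:ℝ) 1 → -z ∈ Set.Icc (-1:ℝ) 1 := fun z hz => hmaps hz
    have hG := gronwall_aux (E := fun z => E (-z)) (E' := fun z => D (-z) * (-1))
      (K := Mm / rmin) ?_ ?_
    · intro x hx y hy hxy
      have := hG (-y) (hmem y hy) (-x) (hmem x hx) (by linarith)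
      simp only [neg_neg] at this
      convert this using 3
      ring
    · intro z hz
      exact HasDerivWithinAt.comp z (hEderiv (-z) (hmem z hz))
        ((hasDerivAt_neg z).hasDerivWithinAt) hmaps
    · intro z hz
      have hz' : -z ∈ Set.Ioo (-1:ℝ) 1 := by
        simp only [Set.mem_Ioo] at *; constructor <;> linarith [hz.1, hz.2]
      show D (-z) * (-1) ≤ Mm / rmin * E (-z)
      rw [hDeq (-z) hz']
      rw [div_mul_eq_mul_div, le_div_iff₀ hrminpos]
      have h1 := hr'ge (-z) (Set.Ioo_subset_Icc_self hz')
      have h2 := hrminle (-z) (Set.Ioo_subset_Icc_self hz')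
      have unn : (0:ℝ) ≤ u (-z) * u (-z) := mul_self_nonneg _
      have u'nn : (0:ℝ) ≤ u' (-z) * u' (-z) := mul_self_nonneg _
      simp only [hEdef]
      nlinarith [mul_le_mul_of_nonneg_right h1 (mul_nonneg (mul_nonneg hl.le unn) hrminpos.le),
        mul_le_mul_of_nonneg_left h2 (mul_nonneg hMm0 (mul_nonneg hl.le unn))]
  -- combine
  intro x hx y hy
  have hexp : ∀ K : ℝ, 0 ≤ K → ∀ s t : ℝ, s ∈ Set.Icc (-1:ℝ) 1 → t ∈ Set.Icc (-1:ℝ) 1 →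
      s ≤ t → Real.exp (K * (t - s)) ≤ Real.exp (2 * K) := by
    intro K hK s t hs ht hst
    apply Real.exp_le_exp.mpr
    nlinarith [hs.1, ht.2]
  have hK1 : (0:ℝ) ≤ Mp / rmin := div_nonneg hMp0 hrminpos.le
  have hK2 : (0:ℝ) ≤ Mm / rmin := div_nonneg hMm0 hrminpos.le
  have hcmaxP : ∀ M : ℝ, 0 ≤ M → cmin ≤ Real.exp (-(2 * M) / rmin) →
      Real.exp (2 * (M / rmin)) ≤ cmax := by
    intro M hM hle
    rw [hcmax]
    have : Real.exp (2 * (M / rmin)) = (Real.exp (-(2 * M) / rmin))⁻¹ := by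
      rw [← Real.exp_neg]; congr 1; field_simp
    rw [this]
    exact inv_anti₀ hcminpos hle
  rcases le_total x y with hxy | hxy
  · have h1 := hbwd x hx y hy hxy
    have h2 : Real.exp ((Mm / rmin) * (y - x)) ≤ cmax :=
      (hexp _ hK2 x y hx hy hxy).trans (hcmaxP Mm hMm0 (hcmin ▸ min_le_right _ _))
    calc E x ≤ E y * Real.exp ((Mm / rmin) * (y - x)) := h1
      _ ≤ E y * cmax := mul_le_mul_of_nonneg_left h2 (hEnn y hy)
      _ = cmax * E y := mul_comm _ _
  · have h1 := hfwd y hy x hx hxy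
    have h2 : Real.exp ((Mp / rmin) * (x - y)) ≤ cmax :=
      (hexp _ hK1 y x hy hx hxy).trans (hcmaxP Mp hMp0 (hcmin ▸ min_le_left _ _))
    calc E x ≤ E y * Real.exp ((Mp / rmin) * (x - y)) := h1
      _ ≤ E y * cmax := mul_le_mul_of_nonneg_left h2 (hEnn y hy)
      _ = cmax * E y := mul_comm _ _

lemma endpoint_aux (r : ℝ → ℝ) (l rmin rmax cmin cmax a₁ : ℝ) (u u' : ℝ → ℝ)
    (hrminpos : 0 < rmin) (hrminle : ∀ x ∈ Set.Icc (-1:ℝ) 1, rmin ≤ r x)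
    (hrmaxge : ∀ x ∈ Set.Icc (-1:ℝ) 1, r x ≤ rmax) (hrmaxpos : 0 < rmax)
    (hcminpos : 0 < cmin) (hcmin1 : cmin ≤ 1) (hcmaxpos : 0 < cmax) (hl : 0 < l)
    (key : ∀ x ∈ Set.Icc (-1:ℝ) 1, ∀ y ∈ Set.Icc (-1:ℝ) 1,
      (u' x * u' x + l * (r x * (u x * u x))) ≤ cmax * (u' y * u' y + l * (r y * (u y * u y))))
    (hEpos : ∀ x ∈ Set.Icc (-1:ℝ) 1, 0 < u' x * u' x + l * (r x * (u x * u x)))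
    (ha₁ : a₁ = Real.sqrt (rmin * cmin / (rmax * cmax)))
    (m : ℕ) (α η : Fin m → ℝ) (hη : ∀ i, η i ∈ Set.Icc (-1:ℝ) 1) (hα : ∑ i, |α i| < a₁)
    (e : ℝ) (he : e ∈ Set.Icc (-1:ℝ) 1) (hbc : u e = ∑ i, α i * u (η i)) :
    u' e ≠ 0 := by
  intro h0
  have hue : u e ≠ 0 := by
    intro h
    have := hEpos e he
    rw [h0, h] at this
    simp at this
  have ha₁pos : 0 < a₁ := by rw [ha₁]; apply Real.sqrt_pos.mpr; positivity
  have ha₁sq : a₁ ^ 2 = rmin * cmin / (rmax * cmax) := by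
    rw [ha₁]; exact Real.sq_sqrt (by positivity)
  have hbx : ∀ x ∈ Set.Icc (-1:ℝ) 1, a₁ * |u x| ≤ |u e| := by
    intro x hx
    have h2 := key x hx e he
    have h6 : rmin * (u x * u x) ≤ cmax * (rmax * (u e * u e)) := by
      have hA : l * (rmin * (u x * u x)) ≤ l * (cmax * (rmax * (u e * u e))) := by
        have i1 : l * (rmin * (u x * u x)) ≤ u' x * u' x + l * (r x * (u x * u x)) := by
          nlinarith [mul_self_nonneg (u' x),
            mul_le_mul_of_nonneg_left (hrminle x hx)
              (mul_nonneg hl.le (mul_self_nonneg (u x)))]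
        have i2 : cmax * (u' e * u' e + l * (r e * (u e * u e))) ≤
            l * (cmax * (rmax * (u e * u e))) := by
          rw [h0]
          nlinarith [mul_le_mul_of_nonneg_left (hrmaxge e he)
            (mul_nonneg (mul_nonneg hcmaxpos.le hl.le) (mul_self_nonneg (u e)))]
        linarith
      exact le_of_mul_le_mul_left hA hl
    have h5 : (a₁ * |u x|) ^ 2 ≤ |u e| ^ 2 := by
      rw [mul_pow, sq_abs, sq_abs, ha₁sq, div_mul_eq_mul_div, div_le_iff₀ (by positivity)]
      nlinarith [h6, mul_nonneg (mul_nonneg hrminpos.le (mul_self_nonneg (u x)))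
        (by linarith : (0:ℝ) ≤ 1 - cmin)]
    have hs := Real.sqrt_le_sqrt h5
    rwa [Real.sqrt_sq (by positivity), Real.sqrt_sq (abs_nonneg _)] at hs
  have hsum : |u e| ≤ (∑ i, |α i|) * (|u e| / a₁) := by
    calc |u e| = |∑ i, α i * u (η i)| := by rw [hbc]
      _ ≤ ∑ i, |α i * u (η i)| := Finset.abs_sum_le_sum_abs _ _
      _ ≤ ∑ i, |α i| * (|u e| / a₁) := by
          apply Finset.sum_le_sum; intro i _
          rw [abs_mul]
          refine mul_le_mul_of_nonneg_left ?_ (abs_nonneg _)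
          rw [le_div_iff₀ ha₁pos, mul_comm]
          exact hbx (η i) (hη i)
      _ = (∑ i, |α i|) * (|u e| / a₁) := by rw [← Finset.sum_mul]
  have hlt : (∑ i, |α i|) * (|u e| / a₁) < a₁ * (|u e| / a₁) :=
    mul_lt_mul_of_pos_right hα (div_pos (abs_pos.mpr hue) ha₁pos)
  have heq : a₁ * (|u e| / a₁) = |u e| := by field_simp
  linarith

theorem stmt12
    (r r' : ℝ → ℝ) (hr : C1I r r') (hrpos : ∀ x ∈ Set.Icc (-1:ℝ) 1, 0 < r x)
    (rmin rmax Mp Mm cmin cmax : ℝ)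
    (hrmin : IsLeast (r '' Set.Icc (-1:ℝ) 1) rmin)
    (hrmax : IsGreatest (r '' Set.Icc (-1:ℝ) 1) rmax)
    (hMp : IsGreatest ((fun x => max (r' x) 0) '' Set.Icc (-1:ℝ) 1) Mp)
    (hMm : IsGreatest ((fun x => max (-(r' x)) 0) '' Set.Icc (-1:ℝ) 1) Mm)
    (hcmin : cmin = min (Real.exp (-(2 * Mp) / rmin)) (Real.exp (-(2 * Mm) / rmin)))
    (hcmax : cmax = cmin⁻¹)
    (a₁ : ℝ) (ha₁ : a₁ = Real.sqrt (rmin * cmin / (rmax * cmax)))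
    (mneg mpos : ℕ) (hmneg : 1 ≤ mneg) (hmpos : 1 ≤ mpos)
    (αneg : Fin mneg → ℝ) (αpos : Fin mpos → ℝ)
    (ηneg : Fin mneg → ℝ) (ηpos : Fin mpos → ℝ)
    (hηneg : ∀ i, ηneg i ∈ Set.Icc (-1:ℝ) 1 ∧ ηneg i ≠ -1)
    (hηpos : ∀ i, ηpos i ∈ Set.Icc (-1:ℝ) 1 ∧ ηpos i ≠ 1)
    (hαneg : ∑ i, |αneg i| < a₁) (hαpos : ∑ i, |αpos i| < a₁)
    (l : ℝ) (hl : 0 < l)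
    (u u' u'' : ℝ → ℝ) (hu : C2I u u' u'')
    (hnt : ∃ x ∈ Set.Icc (-1:ℝ) 1, u x ≠ 0)
    (hode : ∀ x ∈ Set.Ioo (-1:ℝ) 1, -(u'' x) = l * r x * u x)
    (hbcneg : u (-1) = ∑ i, αneg i * u (ηneg i))
    (hbcpos : u 1 = ∑ i, αpos i * u (ηpos i)) :
    u' (-1) ≠ 0 ∧ u' 1 ≠ 0 ∧
      ∃ k : ℕ, 1 ≤ k ∧ (InTk k 1 u u' u'' ∨ InTk k (-1) u u' u'') := by
  obtain ⟨hu1, hu2, hu3⟩ := hu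
  obtain ⟨hr1, hr2⟩ := hr
  have cu : ContinuousOn u (Set.Icc (-1:ℝ) 1) := fun x hx => (hu1 x hx).continuousWithinAt
  have cu' : ContinuousOn u' (Set.Icc (-1:ℝ) 1) := fun x hx => (hu2 x hx).continuousWithinAt
  obtain ⟨⟨x₀, hx₀I, hx₀⟩, hrminub⟩ := hrmin
  have hrminpos : 0 < rmin := hx₀ ▸ hrpos x₀ hx₀I
  have hrminle : ∀ x ∈ Set.Icc (-1:ℝ) 1, rmin ≤ r x := fun x hx => hrminub ⟨x, hx, rfl⟩
  have hrmaxge : ∀ x ∈ Set.Icc (-1:ℝ) 1, r x ≤ rmax := fun x hx => hrmax.2 ⟨x, hx, rfl⟩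
  have hrmaxpos : 0 < rmax := lt_of_lt_of_le hrminpos (hrminub hrmax.1)
  have hMp0 : 0 ≤ Mp := by obtain ⟨x, hx, he⟩ := hMp.1; rw [← he]; exact le_max_right _ _
  have hMm0 : 0 ≤ Mm := by obtain ⟨x, hx, he⟩ := hMm.1; rw [← he]; exact le_max_right _ _
  have hcminpos : 0 < cmin := by rw [hcmin]; positivity
  have hcmin1 : cmin ≤ 1 := by
    rw [hcmin]
    refine (min_le_left _ _).trans ?_
    rw [show (1:ℝ) = Real.exp 0 by rw [Real.exp_zero]]
    apply Real.exp_le_exp.mpr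
    apply div_nonpos_of_nonpos_of_nonneg (by linarith) hrminpos.le
  have hcmaxpos : 0 < cmax := by rw [hcmax]; positivity
  have hcmax1 : 1 ≤ cmax := by
    have hc : cmin * cmin⁻¹ = 1 := mul_inv_cancel₀ (ne_of_gt hcminpos)
    rw [hcmax]
    nlinarith [hc, hcminpos, hcmin1]
  have ha₁pos : 0 < a₁ := by rw [ha₁]; apply Real.sqrt_pos.mpr; positivity
  have ha₁le1 : a₁ ≤ 1 := by
    rw [ha₁]
    rw [show (1:ℝ) = Real.sqrt 1 by rw [Real.sqrt_one]]
    apply Real.sqrt_le_sqrt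
    rw [div_le_one (by positivity)]
    nlinarith [mul_le_mul (hrminub hrmax.1) (hcmin1.trans hcmax1) hcminpos.le hrmaxpos.le]
  have key := energy_cmp r r' ⟨hr1, hr2⟩ hrpos rmin rmax Mp Mm cmin cmax
    ⟨⟨x₀, hx₀I, hx₀⟩, hrminub⟩ hrmax hMp hMm hcmin hcmax l hl u u' u'' ⟨hu1, hu2, hu3⟩ hode
  -- positivity of the energy
  have hEpos : ∀ x ∈ Set.Icc (-1:ℝ) 1, 0 < u' x * u' x + l * (r x * (u x * u x)) := by
    have hEnn : ∀ x ∈ Set.Icc (-1:ℝ) 1, 0 ≤ u' x * u' x + l * (r x * (u x * u x)) := by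
      intro x hx
      nlinarith [mul_self_nonneg (u' x), mul_self_nonneg (u x),
        mul_nonneg (mul_nonneg hl.le (hrpos x hx).le) (mul_self_nonneg (u x))]
    have hE0 : ∀ x ∈ Set.Icc (-1:ℝ) 1, u' x * u' x + l * (r x * (u x * u x)) = 0 →
        ∀ y ∈ Set.Icc (-1:ℝ) 1, u y = 0 := by
      intro x hx h0 y hy
      have h1 := key y hy x hx
      rw [h0, mul_zero] at h1
      have h2 := hEnn y hy
      have heq : u' y * u' y + l * (r y * (u y * u y)) = 0 := le_antisymm h1 h2
      have hry := hrpos y hy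
      have h3 : u y * u y ≤ 0 := by
        nlinarith [mul_self_nonneg (u' y), mul_pos hl hry]
      exact mul_self_eq_zero.mp (le_antisymm h3 (mul_self_nonneg (u y)))
    intro x hx
    rcases (hEnn x hx).lt_or_eq with h | h
    · exact h
    · exfalso
      obtain ⟨y, hy, hyne⟩ := hnt
      exact hyne (hE0 x hx h.symm y hy)
  have hnem1 : u' (-1) ≠ 0 :=
    endpoint_aux r l rmin rmax cmin cmax a₁ u u' hrminpos hrminle hrmaxge hrmaxpos
      hcminpos hcmin1 hcmaxpos hl key hEpos ha₁ mneg αneg ηneg (fun i => (hηneg i).1)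
      hαneg (-1) (by norm_num) hbcneg
  have hne1 : u' 1 ≠ 0 :=
    endpoint_aux r l rmin rmax cmin cmax a₁ u u' hrminpos hrminle hrmaxge hrmaxpos
      hcminpos hcmin1 hcmaxpos hl key hEpos ha₁ mpos αpos ηpos (fun i => (hηpos i).1)
      hαpos 1 (by norm_num) hbcpos
  refine ⟨hnem1, hne1, ?_⟩
  have h2eq : ∀ x ∈ Set.Ioo (-1:ℝ) 1, u'' x = -(l * r x * u x) := by
    intro x hx; have := hode x hx; linarith
  have huz : ∀ x ∈ Set.Icc (-1:ℝ) 1, u' x = 0 → u x ≠ 0 := by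
    intro x hx h0 hu0
    have := hEpos x hx
    rw [h0, hu0] at this
    simp at this
  have hsimple : ∀ x ∈ Set.Ioo (-1:ℝ) 1, u' x = 0 → u'' x ≠ 0 := by
    intro x hx h0 hc
    rw [h2eq x hx] at hc
    have h1 := huz x (Set.Ioo_subset_Icc_self hx) h0
    have h2 := hrpos x (Set.Ioo_subset_Icc_self hx)
    rcases mul_eq_zero.mp (neg_eq_zero.mp hc) with h | h
    · rcases mul_eq_zero.mp h with h' | h'
      · exact absurd h' (ne_of_gt hl)
      · exact absurd h' (ne_of_gt h2)
    · exact h1 h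
  have hDA : ∀ x ∈ Set.Ioo (-1:ℝ) 1, HasDerivAt u' (u'' x) x := by
    intro x hx
    exact (hu2 x (Set.Ioo_subset_Icc_self hx)).hasDerivAt (Icc_mem_nhds hx.1 hx.2)
  -- finiteness of the zero set of u'
  have hfin : {x ∈ Set.Ioo (-1:ℝ) 1 | u' x = 0}.Finite := by
    set Z := {x ∈ Set.Ioo (-1:ℝ) 1 | u' x = 0} with hZdef
    by_contra hinf
    rw [← Set.not_infinite, not_not] at hinf
    obtain ⟨z, hzK, hacc⟩ := hinf.exists_accPt_of_subset_isCompact isCompact_Icc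
      (fun x hx => Set.Ioo_subset_Icc_self hx.1)
    have hclosed : IsClosed {x ∈ Set.Icc (-1:ℝ) 1 | u' x = 0} := by
      have h := cu'.preimage_isClosed_of_isClosed isClosed_Icc
        (isClosed_singleton (x := (0:ℝ)))
      convert h using 1
      rfl
    have hzc : z ∈ closure Z := by
      have hcp : ClusterPt z (𝓟 Z) := hacc.clusterPt
      exact mem_closure_iff_clusterPt.mpr hcp
    have hzmem : z ∈ {x ∈ Set.Icc (-1:ℝ) 1 | u' x = 0} := by
      apply closure_minimal _ hclosed hzc
      exact fun x hx => ⟨Set.Ioo_subset_Icc_self hx.1, hx.2⟩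
    have hzIoo : z ∈ Set.Ioo (-1:ℝ) 1 := by
      rcases hzmem with ⟨hzI, hz0⟩
      refine ⟨lt_of_le_of_ne hzI.1 ?_, lt_of_le_of_ne hzI.2 ?_⟩
      · intro h; exact hnem1 (h ▸ hz0)
      · intro h; exact hne1 (h ▸ hz0)
    have hev : ∀ᶠ x in 𝓝[≠] z, u' x ≠ u' z :=
      (hDA z hzIoo).eventually_ne (hsimple z hzIoo hzmem.2)
    have hfreq := accPt_iff_frequently.mp hacc
    have hev' : ∀ᶠ x in 𝓝 z, x ≠ z → u' x ≠ u' z := by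
      rw [eventually_nhdsWithin_iff] at hev
      filter_upwards [hev] with x hx hxz
      exact hx (Set.mem_compl_singleton_iff.mpr hxz)
    obtain ⟨w, ⟨hw1, hw2⟩, hw3⟩ := (hfreq.and_eventually hev').exists
    exact (hw3 hw1) (hw2.2.trans hzmem.2.symm)
  -- nonemptiness of the zero set of u'
  have hZne : {x ∈ Set.Ioo (-1:ℝ) 1 | u' x = 0}.Nonempty := by
    by_contra hempty
    rw [Set.not_nonempty_iff_eq_empty] at hempty
    have hnzIoo : ∀ x ∈ Set.Ioo (-1:ℝ) 1, u' x ≠ 0 := by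
      intro x hx h0
      have : x ∈ {x ∈ Set.Ioo (-1:ℝ) 1 | u' x = 0} := ⟨hx, h0⟩
      rw [hempty] at this
      exact Set.notMem_empty x this
    have hnz : ∀ x ∈ Set.Icc (-1:ℝ) 1, u' x ≠ 0 := by
      intro x hx
      rcases eq_or_lt_of_le hx.1 with h | h
      · rwa [← h]
      rcases eq_or_lt_of_le hx.2 with h2 | h2
      · rwa [h2]
      exact hnzIoo x ⟨h, h2⟩
    -- u' has constant sign
    have hsign : (∀ x ∈ Set.Icc (-1:ℝ) 1, 0 ≤ u' x) ∨ (∀ x ∈ Set.Icc (-1:ℝ) 1, u' x ≤ 0) := by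
      have hmix : ¬ ((∃ x ∈ Set.Icc (-1:ℝ) 1, 0 < u' x) ∧ ∃ y ∈ Set.Icc (-1:ℝ) 1, u' y < 0) := by
        rintro ⟨⟨x, hx, hxp⟩, ⟨y, hy, hyn⟩⟩
        have huIcc : Set.uIcc x y ⊆ Set.Icc (-1:ℝ) 1 := Set.ordConnected_Icc.uIcc_subset hx hy
        obtain ⟨w, hw, hw0⟩ := intermediate_value_uIcc (cu'.mono huIcc)
          (Set.mem_uIcc.mpr (Or.inr ⟨hyn.le, hxp.le⟩))
        exact hnz w (huIcc hw) hw0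
      by_contra hcon
      push_neg at hcon
      obtain ⟨⟨x, hx, hxn⟩, ⟨y, hy, hyn⟩⟩ := hcon
      exact hmix ⟨⟨y, hy, hyn⟩, ⟨x, hx, hxn⟩⟩
    -- |u| is maximized at an endpoint
    have hmono : ∀ x ∈ Set.Icc (-1:ℝ) 1, |u x| ≤ max |u (-1)| |u 1| := by
      have hm1 : (-1:ℝ) ∈ Set.Icc (-1:ℝ) 1 := by norm_num
      have hp1 : (1:ℝ) ∈ Set.Icc (-1:ℝ) 1 := by norm_num
      have hd : ∀ x ∈ interior (Set.Icc (-1:ℝ) 1),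
          HasDerivWithinAt u (u' x) (interior (Set.Icc (-1:ℝ) 1)) x := by
        intro x hx
        rw [interior_Icc] at hx ⊢
        exact (hu1 x (Set.Ioo_subset_Icc_self hx)).mono Set.Ioo_subset_Icc_self
      rcases hsign with hpos | hneg
      · have hm : MonotoneOn u (Set.Icc (-1:ℝ) 1) :=
          monotoneOn_of_hasDerivWithinAt_nonneg (convex_Icc _ _) cu hd
            (fun x hx => hpos x (by rw [interior_Icc] at hx; exact Set.Ioo_subset_Icc_self hx))
        intro x hx
        rw [abs_le]
        constructor
        · calc -(max |u (-1)| |u 1|) ≤ -|u (-1)| := by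
                simp only [neg_le_neg_iff]; exact le_max_left _ _
            _ ≤ u (-1) := neg_abs_le _
            _ ≤ u x := hm hm1 hx hx.1
        · calc u x ≤ u 1 := hm hx hp1 hx.2
            _ ≤ |u 1| := le_abs_self _
            _ ≤ max |u (-1)| |u 1| := le_max_right _ _
      · have hm : AntitoneOn u (Set.Icc (-1:ℝ) 1) :=
          antitoneOn_of_hasDerivWithinAt_nonpos (convex_Icc _ _) cu hd
            (fun x hx => hneg x (by rw [interior_Icc] at hx; exact Set.Ioo_subset_Icc_self hx))
        intro x hx
        rw [abs_le]
        constructor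
        · calc -(max |u (-1)| |u 1|) ≤ -|u 1| := by
                simp only [neg_le_neg_iff]; exact le_max_right _ _
            _ ≤ u 1 := neg_abs_le _
            _ ≤ u x := hm hx hp1 hx.2
        · calc u x ≤ u (-1) := hm hm1 hx hx.1
            _ ≤ |u (-1)| := le_abs_self _
            _ ≤ max |u (-1)| |u 1| := le_max_left _ _
    -- a maximizer of |u|
    obtain ⟨z, hzI, hzmax⟩ : ∃ z ∈ Set.Icc (-1:ℝ) 1, ∀ x ∈ Set.Icc (-1:ℝ) 1, |u x| ≤ |u z| := by
      obtain ⟨z, hzI, hz⟩ := isCompact_Icc.exists_isMaxOn (Set.nonempty_Icc.mpr (by norm_num))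
        cu.abs
      exact ⟨z, hzI, fun x hx => hz hx⟩
    obtain ⟨w, hwI, hwne⟩ := hnt
    have hzpos : 0 < |u z| := lt_of_lt_of_le (abs_pos.mpr hwne) (hzmax w hwI)
    have hsumlt : ∀ (m : ℕ) (α η : Fin m → ℝ), (∀ i, η i ∈ Set.Icc (-1:ℝ) 1) →
        (∑ i, |α i| < a₁) → |∑ i, α i * u (η i)| < |u z| := by
      intro m α η hη hα
      calc |∑ i, α i * u (η i)| ≤ ∑ i, |α i * u (η i)| := Finset.abs_sum_le_sum_abs _ _
        _ ≤ ∑ i, |α i| * |u z| := by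
            apply Finset.sum_le_sum
            intro i _
            rw [abs_mul]
            exact mul_le_mul_of_nonneg_left (hzmax (η i) (hη i)) (abs_nonneg _)
        _ = (∑ i, |α i|) * |u z| := by rw [← Finset.sum_mul]
        _ < a₁ * |u z| := mul_lt_mul_of_pos_right hα hzpos
        _ ≤ 1 * |u z| := mul_le_mul_of_nonneg_right ha₁le1 hzpos.le
        _ = |u z| := one_mul _
    have hb1 : |u 1| < |u z| := by rw [hbcpos]; exact hsumlt mpos αpos ηpos (fun i => (hηpos i).1) hαpos
    have hbm1 : |u (-1)| < |u z| := by rw [hbcneg]; exact hsumlt mneg αneg ηneg (fun i => (hηneg i).1) hαneg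
    have := hmono z hzI
    rcases max_cases |u (-1)| |u 1| with ⟨h, _⟩ | ⟨h, _⟩ <;> rw [h] at this <;> linarith
  -- condition (c)
  have hcc : ∀ a b : ℝ, a ∈ Set.Ioo (-1:ℝ) 1 → b ∈ Set.Ioo (-1:ℝ) 1 → u' a = 0 → u' b = 0 →
      a < b → (∀ c ∈ Set.Ioo a b, u' c ≠ 0) → ∃ c ∈ Set.Ioo a b, u c = 0 := by
    intro a b ha hb ha0 hb0 hab hnz
    have hsub : Set.Ioo a b ⊆ Set.Ioo (-1:ℝ) 1 :=
      fun x hx => ⟨lt_trans ha.1 hx.1, lt_trans hx.2 hb.2⟩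
    have hsubI : Set.Icc a b ⊆ Set.Icc (-1:ℝ) 1 := Set.Icc_subset_Icc ha.1.le hb.2.le
    have hnomix : ¬ ((∃ x ∈ Set.Ioo a b, 0 < u' x) ∧ ∃ y ∈ Set.Ioo a b, u' y < 0) := by
      rintro ⟨⟨x, hx, hxp⟩, ⟨y, hy, hyn⟩⟩
      have huIcc : Set.uIcc x y ⊆ Set.Ioo a b := Set.ordConnected_Ioo.uIcc_subset hx hy
      have hcont : ContinuousOn u' (Set.uIcc x y) :=
        cu'.mono (huIcc.trans (hsub.trans Set.Ioo_subset_Icc_self))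
      have h0mem : (0:ℝ) ∈ Set.uIcc (u' x) (u' y) :=
        Set.mem_uIcc.mpr (Or.inr ⟨hyn.le, hxp.le⟩)
      obtain ⟨w, hw, hw0⟩ := intermediate_value_uIcc hcont h0mem
      exact hnz w (huIcc hw) hw0
    have hda := hDA a ha
    have hdb := hDA b hb
    have ha'' := hsimple a ha ha0
    have hb'' := hsimple b hb hb0
    have hsoa := hasDerivAt_iff_tendsto_slope.mp hda
    have hsob := hasDerivAt_iff_tendsto_slope.mp hdb
    have hmku : (𝓝[>] a) ≤ (𝓝[≠] a) := nhdsWithin_mono _ (fun x hx => ne_of_gt hx)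
    have hmkd : (𝓝[<] b) ≤ (𝓝[≠] b) := nhdsWithin_mono _ (fun x hx => ne_of_lt hx)
    have hmemIooA : ∀ᶠ x in 𝓝[>] a, x ∈ Set.Ioo a b :=
      Filter.eventually_mem_set.mpr (Ioo_mem_nhdsGT_of_mem ⟨le_refl a, hab⟩)
    have hmemIooB : ∀ᶠ x in 𝓝[<] b, x ∈ Set.Ioo a b :=
      Filter.eventually_mem_set.mpr (Ioo_mem_nhdsLT_of_mem ⟨hab, le_refl b⟩)
    have hslopea : ∀ x, slope u' a x = u' x / (x - a) := by
      intro x; rw [slope_def_field, ha0, sub_zero]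
    have hslopeb : ∀ x, slope u' b x = u' x / (x - b) := by
      intro x; rw [slope_def_field, hb0, sub_zero]
    have hpta : ∃ x ∈ Set.Ioo a b, 0 < u' x * u'' a := by
      rcases ha''.lt_or_gt with hneg | hpos
      · have hev : ∀ᶠ x in 𝓝[>] a, slope u' a x < 0 :=
          (hsoa.eventually (eventually_lt_nhds hneg)).filter_mono hmku
        obtain ⟨x, hx1, hx2⟩ := (hev.and hmemIooA).exists
        refine ⟨x, hx2, ?_⟩
        rw [hslopea x] at hx1
        have hxa : 0 < x - a := sub_pos.mpr hx2.1
        have : u' x < 0 := by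
          by_contra hge
          push_neg at hge
          exact absurd (div_nonneg hge hxa.le) (not_le.mpr hx1)
        exact mul_pos_of_neg_of_neg this hneg
      · have hev : ∀ᶠ x in 𝓝[>] a, 0 < slope u' a x :=
          (hsoa.eventually (eventually_gt_nhds hpos)).filter_mono hmku
        obtain ⟨x, hx1, hx2⟩ := (hev.and hmemIooA).exists
        refine ⟨x, hx2, ?_⟩
        rw [hslopea x] at hx1
        have hxa : 0 < x - a := sub_pos.mpr hx2.1
        have h : 0 < u' x := by
          have h := mul_pos hx1 hxa
          rwa [div_mul_cancel₀ _ (ne_of_gt hxa)] at h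
        exact mul_pos h hpos
    have hptb : ∃ y ∈ Set.Ioo a b, u' y * u'' b < 0 := by
      rcases hb''.lt_or_gt with hneg | hpos
      · have hev : ∀ᶠ y in 𝓝[<] b, slope u' b y < 0 :=
          (hsob.eventually (eventually_lt_nhds hneg)).filter_mono hmkd
        obtain ⟨y, hy1, hy2⟩ := (hev.and hmemIooB).exists
        refine ⟨y, hy2, ?_⟩
        rw [hslopeb y] at hy1
        have hyb : y - b < 0 := sub_neg.mpr hy2.2
        have h : 0 < u' y := by
          rcases div_neg_iff.mp hy1 with ⟨h1, h2⟩ | ⟨h1, h2⟩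
          · exact h1
          · linarith
        exact mul_neg_of_pos_of_neg h hneg
      · have hev : ∀ᶠ y in 𝓝[<] b, 0 < slope u' b y :=
          (hsob.eventually (eventually_gt_nhds hpos)).filter_mono hmkd
        obtain ⟨y, hy1, hy2⟩ := (hev.and hmemIooB).exists
        refine ⟨y, hy2, ?_⟩
        rw [hslopeb y] at hy1
        have hyb : y - b < 0 := sub_neg.mpr hy2.2
        have h : u' y < 0 := by
          rcases div_pos_iff.mp hy1 with ⟨h1, h2⟩ | ⟨h1, h2⟩
          · linarith
          · exact h1
        exact mul_neg_of_neg_of_pos h hpos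
    obtain ⟨x, hx, hxs⟩ := hpta
    obtain ⟨y, hy, hys⟩ := hptb
    have habprod : u'' a * u'' b < 0 := by
      rcases ha''.lt_or_gt with hA | hA <;> rcases hb''.lt_or_gt with hB | hB
      · exfalso
        have hxn : u' x < 0 := by nlinarith
        have hyp : 0 < u' y := by nlinarith
        exact hnomix ⟨⟨y, hy, hyp⟩, ⟨x, hx, hxn⟩⟩
      · exact mul_neg_of_neg_of_pos hA hB
      · exact mul_neg_of_pos_of_neg hA hB
      · exfalso
        have hxp : 0 < u' x := by nlinarith
        have hyn : u' y < 0 := by nlinarith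
        exact hnomix ⟨⟨x, hx, hxp⟩, ⟨y, hy, hyn⟩⟩
    have hra := hrpos a (Set.Ioo_subset_Icc_self ha)
    have hrb := hrpos b (Set.Ioo_subset_Icc_self hb)
    have hea := h2eq a ha
    have heb := h2eq b hb
    have huab : u a * u b < 0 := by
      rw [hea, heb] at habprod
      nlinarith [mul_pos (mul_pos hl hra) (mul_pos hl hrb)]
    have hucont : ContinuousOn u (Set.Icc a b) := cu.mono hsubI
    rcases mul_neg_iff.mp huab with ⟨hua, hub⟩ | ⟨hua, hub⟩
    · obtain ⟨c, hc, hc0⟩ := intermediate_value_Ioo' hab.le hucont ⟨hub, hua⟩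
      exact ⟨c, hc, hc0⟩
    · obtain ⟨c, hc, hc0⟩ := intermediate_value_Ioo hab.le hucont ⟨hua, hub⟩
      exact ⟨c, hc, hc0⟩
  refine ⟨{x ∈ Set.Ioo (-1:ℝ) 1 | u' x = 0}.ncard, (Set.ncard_pos hfin).mpr hZne, ?_⟩
  rcases hnem1.lt_or_gt with hlt | hgt
  · right
    exact ⟨⟨hnem1, hne1, by nlinarith⟩, ⟨hsimple, rfl⟩, hcc⟩
  · left
    exact ⟨⟨hnem1, hne1, by simpa using hgt⟩, ⟨hsimple, rfl⟩, hcc⟩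
end
end

section
/- Fix r : [-1,1] → ℝ continuously differentiable with r > 0 and the multi-point boundary data. For every Λ > 0 there exist an integer k_s ≥ 1 and a constant κ > 0 (depending only on Λ and r) such that: if λ > 0 and u is a twice continuously differentiable function on [-1,1], not identically zero, satisfying −u'' = λ r u on (−1,1) together with the multi-point boundary conditions, and u ∈ T_k for some integer k ≥ k_s, then Λ + 1 ≤ λ ≤ κ k². -/
open Set Real

noncomputable section

private lemma aux_gap (f : ℕ → ℝ) (d : ℝ) :
    ∀ n, (∀ i < n, f i + d < f (i + 1)) → f 0 + n * d ≤ f n := by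
  intro n
  induction n with
  | zero => simp
  | succ n ih =>
    intro h
    have h1 := ih (fun i hi => h i (by omega))
    have h2 := h n (by omega)
    push_cast
    nlinarith

private lemma aux_chain (g : ℕ → ℝ) (n : ℕ) (h : ∀ i, i + 1 ≤ n → g i < g (i + 1)) :
    ∀ j ≤ n, ∀ i < j, g i < g j := by
  intro j
  induction j with
  | zero => omega
  | succ j ih =>
    intro hj i hi
    rcases Nat.lt_or_ge i j with h1 | h1
    · exact (ih (by omega) i h1).trans (h j (by omega))
    · have : i = j := by omega
      subst this
      exact h i (by omega)

private lemma sign_const (u : ℝ → ℝ) (a b : ℝ) (hab : a ≤ b)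
    (hc : ContinuousOn u (Icc a b)) (hne : ∀ x ∈ Icc a b, u x ≠ 0) :
    (∀ x ∈ Icc a b, 0 < u x) ∨ (∀ x ∈ Icc a b, u x < 0) := by
  have ha : a ∈ Icc a b := ⟨le_rfl, hab⟩
  rcases (hne a ha).lt_or_gt with h0 | h0
  · right
    intro x hx
    by_contra hcon
    push_neg at hcon
    have hx0 : 0 < u x := (hne x hx).lt_or_gt.resolve_left (by linarith)
    have : (0:ℝ) ∈ Icc (u a) (u x) := ⟨h0.le, hx0.le⟩
    obtain ⟨z, hz, hz0⟩ := intermediate_value_Icc hx.1 (hc.mono (Icc_subset_Icc le_rfl hx.2)) this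
    exact hne z ⟨hz.1, hz.2.trans hx.2⟩ hz0
  · left
    intro x hx
    by_contra hcon
    push_neg at hcon
    have hx0 : u x < 0 := (hne x hx).lt_or_gt.resolve_right (by linarith)
    have : (0:ℝ) ∈ Icc (u x) (u a) := ⟨hx0.le, h0.le⟩
    obtain ⟨z, hz, hz0⟩ := intermediate_value_Icc' hx.1 (hc.mono (Icc_subset_Icc le_rfl hx.2)) this
    exact hne z ⟨hz.1, hz.2.trans hx.2⟩ hz0

private lemma lemA (u u' u'' : ℝ → ℝ) (a b K : ℝ) (hab : a < b)
    (hu : ∀ x ∈ Icc a b, HasDerivWithinAt u (u' x) (Icc a b) x)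
    (hu' : ∀ x ∈ Icc a b, HasDerivWithinAt u' (u'' x) (Icc a b) x)
    (hbd : ∀ x ∈ Icc a b, |u'' x| ≤ K * |u x|)
    (ha : u a = 0) (hb : u b = 0)
    (hp : ∃ p ∈ Icc a b, u p ≠ 0) :
    1 ≤ K * (b - a) ^ 2 := by
  have hcu : ContinuousOn u (Icc a b) := fun x hx => (hu x hx).continuousWithinAt
  obtain ⟨p, hpmem, hpmax⟩ := isCompact_Icc.exists_isMaxOn ⟨a, le_rfl, hab.le⟩
    (hcu.abs)
  obtain ⟨q, hq, hq0⟩ := hp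
  have hM : 0 < |u p| := lt_of_lt_of_le (abs_pos.mpr hq0) (hpmax hq)
  have hmax : ∀ x ∈ Icc a b, |u x| ≤ |u p| := fun x hx => hpmax hx
  have hpa : a ≠ p := fun h => by rw [← h, ha, abs_zero] at hM; linarith
  have hpb : b ≠ p := fun h => by rw [← h, hb, abs_zero] at hM; linarith
  have hpIoo : p ∈ Ioo a b := ⟨lt_of_le_of_ne hpmem.1 hpa, lt_of_le_of_ne hpmem.2 (Ne.symm hpb)⟩
  have hnhds : Icc a b ∈ nhds p := Icc_mem_nhds hpIoo.1 hpIoo.2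
  have hdp : HasDerivAt u (u' p) p := (hu p hpmem).hasDerivAt hnhds
  have hup0 : u' p = 0 := by
    rcases (abs_pos.mp hM).lt_or_gt with hneg | hpos
    · refine IsLocalMin.hasDerivAt_eq_zero ?_ hdp
      filter_upwards [hnhds] with x hx
      have := hmax x hx
      have h2 : -|u x| ≤ u x := neg_abs_le _
      have h3 : |u p| = -(u p) := abs_of_neg hneg
      linarith
    · refine IsLocalMax.hasDerivAt_eq_zero ?_ hdp
      filter_upwards [hnhds] with x hx
      have := hmax x hx
      have h2 : u x ≤ |u x| := le_abs_self _
      have h3 : |u p| = u p := abs_of_pos hpos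
      linarith
  have hKpos : 0 ≤ K := by
    by_contra hK
    push_neg at hK
    have := hbd q hq
    nlinarith [abs_nonneg (u'' q), abs_pos.mpr hq0]
  have hC : ∀ x ∈ Icc a b, ‖u'' x‖ ≤ K * |u p| := by
    intro x hx
    calc ‖u'' x‖ = |u'' x| := rfl
    _ ≤ K * |u x| := hbd x hx
    _ ≤ K * |u p| := mul_le_mul_of_nonneg_left (hmax x hx) hKpos
  have hu'bd : ∀ x ∈ Icc a b, ‖u' x‖ ≤ K * |u p| * (b - a) := by
    intro x hx
    have := Convex.norm_image_sub_le_of_norm_hasDerivWithin_le hu' hC (convex_Icc a b) hpmem hx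
    rw [hup0, sub_zero] at this
    refine this.trans ?_
    have h1 : ‖x - p‖ ≤ b - a := by
      rw [Real.norm_eq_abs, abs_le]
      constructor <;> [linarith [hx.1, hpmem.2]; linarith [hx.2, hpmem.1]]
    exact mul_le_mul_of_nonneg_left h1 (mul_nonneg hKpos (abs_nonneg _))
  have key := Convex.norm_image_sub_le_of_norm_hasDerivWithin_le hu hu'bd (convex_Icc a b)
    hpmem ⟨le_rfl, hab.le⟩
  rw [ha] at key
  have h1 : ‖a - p‖ ≤ b - a := by
    rw [Real.norm_eq_abs, abs_le]
    constructor <;> [linarith [hpmem.2]; linarith [hpmem.1]]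
  have h2 : ‖(0:ℝ) - u p‖ = |u p| := by rw [zero_sub, norm_neg]; rfl
  rw [h2] at key
  have h3 : |u p| ≤ K * |u p| * (b - a) * (b - a) :=
    key.trans (mul_le_mul_of_nonneg_left h1 (mul_nonneg (mul_nonneg hKpos (abs_nonneg _)) (by linarith)))
  nlinarith

private lemma lemB (u u' u'' : ℝ → ℝ) (a b m s : ℝ) (hm : 0 < m) (hab : a < b)
    (hs : s = √m) (hsb : s * (b - a) = π)
    (hu : ∀ x ∈ Icc a b, HasDerivWithinAt u (u' x) (Icc a b) x)
    (hu' : ∀ x ∈ Icc a b, HasDerivWithinAt u' (u'' x) (Icc a b) x)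
    (hode : ∀ x ∈ Ioo a b, u'' x ≤ -m * u x)
    (hpos : ∀ x ∈ Icc a b, 0 < u x) : False := by
  have hs0 : 0 < s := hs ▸ Real.sqrt_pos.mpr hm
  have hs2 : s * s = m := hs ▸ Real.mul_self_sqrt hm.le
  set W : ℝ → ℝ := fun y => u' y * Real.sin (s * (y - a)) - u y * (s * Real.cos (s * (y - a)))
    with hW
  have hWderiv : ∀ x ∈ Ioo a b, HasDerivAt W ((u'' x + m * u x) * Real.sin (s * (x - a))) x := by
    intro x hx
    have hnhds : Icc a b ∈ nhds x := Icc_mem_nhds hx.1 hx.2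
    have hxI : x ∈ Icc a b := ⟨hx.1.le, hx.2.le⟩
    have hdu : HasDerivAt u (u' x) x := (hu x hxI).hasDerivAt hnhds
    have hdu' : HasDerivAt u' (u'' x) x := (hu' x hxI).hasDerivAt hnhds
    have hinner : HasDerivAt (fun y : ℝ => s * (y - a)) s x := by
      simpa using ((hasDerivAt_id x).sub_const a).const_mul s
    have hsin : HasDerivAt (fun y : ℝ => Real.sin (s * (y - a)))
        (Real.cos (s * (x - a)) * s) x := (Real.hasDerivAt_sin _).comp x hinner
    have hcos : HasDerivAt (fun y : ℝ => Real.cos (s * (y - a)))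
        (-Real.sin (s * (x - a)) * s) x := (Real.hasDerivAt_cos _).comp x hinner
    have h1 := (hdu'.mul hsin).sub (hdu.mul ((hcos.const_mul s)))
    refine h1.congr_deriv ?_
    linear_combination (u x * Real.sin (s * (x - a))) * hs2
  have hWcont : ContinuousOn W (Icc a b) := by
    have hcu : ContinuousOn u (Icc a b) := fun x hx => (hu x hx).continuousWithinAt
    have hcu' : ContinuousOn u' (Icc a b) := fun x hx => (hu' x hx).continuousWithinAt
    fun_prop
  have hanti : AntitoneOn W (Icc a b) := by
    apply antitoneOn_of_deriv_nonpos (convex_Icc a b) hWcont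
    · intro x hx
      rw [interior_Icc] at hx
      exact (hWderiv x hx).differentiableAt.differentiableWithinAt
    · intro x hx
      rw [interior_Icc] at hx
      rw [(hWderiv x hx).deriv]
      have hsinn : 0 ≤ Real.sin (s * (x - a)) := by
        apply Real.sin_nonneg_of_nonneg_of_le_pi
        · nlinarith [hx.1]
        · nlinarith [hx.2]
      have := hode x hx
      have hux := hpos x ⟨hx.1.le, hx.2.le⟩
      nlinarith
  have hWa : W a = -(u a * s) := by
    simp [hW]
  have hWb : W b = u b * s := by
    have : s * (b - a) = π := hsb
    simp [hW, this, Real.sin_pi, Real.cos_pi]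
  have h1 := hanti (left_mem_Icc.mpr hab.le) (right_mem_Icc.mpr hab.le) hab.le
  rw [hWa, hWb] at h1
  have hua := hpos a (left_mem_Icc.mpr hab.le)
  have hub := hpos b (right_mem_Icc.mpr hab.le)
  nlinarith

set_option maxHeartbeats 1600000 in
theorem stmt14
    (r r' : ℝ → ℝ) (hr : C1I r r') (hrpos : ∀ x ∈ Set.Icc (-1:ℝ) 1, 0 < r x)
    (mneg mpos : ℕ) (hmneg : 1 ≤ mneg) (hmpos : 1 ≤ mpos)
    (αneg : Fin mneg → ℝ) (αpos : Fin mpos → ℝ)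
    (ηneg : Fin mneg → ℝ) (ηpos : Fin mpos → ℝ)
    (hηneg : ∀ i, ηneg i ∈ Set.Icc (-1:ℝ) 1 ∧ ηneg i ≠ -1)
    (hηpos : ∀ i, ηpos i ∈ Set.Icc (-1:ℝ) 1 ∧ ηpos i ≠ 1)
    (Λ : ℝ) (hΛ : 0 < Λ) :
    ∃ (kₛ : ℕ) (κ : ℝ), 1 ≤ kₛ ∧ 0 < κ ∧
      ∀ (l : ℝ), 0 < l →
      ∀ u u' u'' : ℝ → ℝ, C2I u u' u'' →
        (∃ x ∈ Set.Icc (-1:ℝ) 1, u x ≠ 0) →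
        (∀ x ∈ Set.Ioo (-1:ℝ) 1, -(u'' x) = l * r x * u x) →
        u (-1) = ∑ i, αneg i * u (ηneg i) →
        u 1 = ∑ i, αpos i * u (ηpos i) →
        ∀ k : ℕ, kₛ ≤ k → (InTk k 1 u u' u'' ∨ InTk k (-1) u u' u'') →
        Λ + 1 ≤ l ∧ l ≤ κ * (k : ℝ) ^ 2 := by
  classical
  have hcr : ContinuousOn r (Icc (-1:ℝ) 1) := fun x hx => (hr.1 x hx).continuousWithinAt
  obtain ⟨x₀, hx₀, hmin⟩ := isCompact_Icc.exists_isMinOn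
    (⟨-1, by norm_num⟩ : (Icc (-1:ℝ) 1).Nonempty) hcr
  obtain ⟨x₁, hx₁, hmax⟩ := isCompact_Icc.exists_isMaxOn
    (⟨-1, by norm_num⟩ : (Icc (-1:ℝ) 1).Nonempty) hcr
  set R₀ := r x₀ with hR₀def
  set R₁ := r x₁ with hR₁def
  have hR₀ : 0 < R₀ := hrpos x₀ hx₀
  have hR₁ : 0 < R₁ := hrpos x₁ hx₁
  have hminle : ∀ x ∈ Icc (-1:ℝ) 1, R₀ ≤ r x := fun x hx => hmin hx
  have hmaxle : ∀ x ∈ Icc (-1:ℝ) 1, r x ≤ R₁ := fun x hx => hmax hx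
  refine ⟨⌈2 * √(R₁ * (Λ + 1))⌉₊ + 3, 9 * π ^ 2 / R₀, by omega, by positivity, ?_⟩
  intro l hl u u' u'' hC2 hnz hode hbc1 hbc2 k hk hT
  have hbpart := hT.elim (fun h => And.right h) (fun h => And.right h)
  obtain ⟨⟨hsimple, hcard⟩, hbetween⟩ := hbpart
  have hk3 : 3 ≤ k := by omega
  set Z := {x ∈ Ioo (-1:ℝ) 1 | u' x = 0} with hZdef
  have hZfin : Z.Finite := by
    by_contra h
    have h' : Z.Infinite := h
    rw [h'.ncard] at hcard
    omega
  set F := hZfin.toFinset with hFdef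
  have hF : F.card = k := by
    rw [← Set.ncard_eq_toFinset_card Z hZfin]
    exact hcard
  set e := F.orderIsoOfFin hF with hedef
  set X : ℕ → ℝ := fun i => if h : i < k then (e ⟨i, h⟩ : ℝ) else 0 with hXdef
  have hXmem : ∀ i, i < k → X i ∈ Z := by
    intro i hi
    simp only [hXdef, dif_pos hi]
    exact hZfin.mem_toFinset.mp (e ⟨i, hi⟩).2
  have hXlt : ∀ i j, i < k → j < k → i < j → X i < X j := by
    intro i j hi hj hij
    simp only [hXdef, dif_pos hi, dif_pos hj]
    exact Subtype.coe_lt_coe.mpr (e.lt_iff_lt.mpr (by exact Fin.mk_lt_mk.mpr hij))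
  have hXnot : ∀ i, i + 1 < k → ∀ y ∈ Z, ¬(X i < y ∧ y < X (i + 1)) := by
    intro i hi y hy ⟨h1, h2⟩
    have hyF : y ∈ F := hZfin.mem_toFinset.mpr hy
    set j : Fin k := e.symm ⟨y, hyF⟩ with hjdef
    have hej : (e j : ℝ) = y := by rw [hjdef, OrderIso.apply_symm_apply]
    have hi' : i < k := by omega
    have hlt1 : (⟨i, hi'⟩ : Fin k) < j := by
      rw [← e.lt_iff_lt]
      apply Subtype.coe_lt_coe.mp
      rw [hej]
      simpa only [hXdef, dif_pos hi'] using h1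
    have hlt2 : j < (⟨i + 1, hi⟩ : Fin k) := by
      rw [← e.lt_iff_lt]
      apply Subtype.coe_lt_coe.mp
      rw [hej]
      simpa only [hXdef, dif_pos hi] using h2
    rw [Fin.lt_def] at hlt1 hlt2
    simp only [Fin.val_mk] at hlt1 hlt2
    omega
  have hCex : ∀ i, i + 1 < k → ∃ c ∈ Ioo (X i) (X (i + 1)), u c = 0 := by
    intro i hi
    have hXi := hXmem i (by omega)
    have hXi1 := hXmem (i + 1) hi
    refine hbetween (X i) (X (i + 1)) hXi.1 hXi1.1 hXi.2 hXi1.2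
      (hXlt i (i + 1) (by omega) hi (by omega)) ?_
    intro c hc h0
    exact hXnot i hi c ⟨⟨hXi.1.1.trans hc.1, hc.2.trans hXi1.1.2⟩, h0⟩ ⟨hc.1, hc.2⟩
  choose! C hCmem hCzero using hCex
  -- basic range facts
  have hCrange : ∀ i, i + 1 < k → -1 < C i ∧ C i < 1 := by
    intro i hi
    have h1 := (hCmem i hi).1
    have h2 := (hCmem i hi).2
    have hXi := hXmem i (by omega)
    have hXi1 := hXmem (i + 1) hi
    exact ⟨hXi.1.1.trans h1, h2.trans hXi1.1.2⟩
  set n := k - 2 with hndef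
  have hkn : n + 2 = k := by omega
  have hn1 : 1 ≤ n := by omega
  have hnR : (0:ℝ) < n := by exact_mod_cast hn1
  -- LOWER BOUND
  have hlow : Λ + 1 ≤ l := by
    have hgap : ∃ i, i < n ∧ C (i + 1) - C i ≤ 2 / n := by
      by_contra hcon
      push_neg at hcon
      have haux := aux_gap C (2 / n) n (fun i hi => by
        have := hcon i hi
        linarith)
      have h2 : (n:ℝ) * (2 / n) = 2 := by field_simp
      have hC0 := hCrange 0 (by omega)
      have hCn := hCrange n (by omega)
      rw [h2] at haux
      linarith [hC0.1, hCn.2]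
    obtain ⟨i, hi, hgaple⟩ := hgap
    have hi1 : i + 1 < k := by omega
    have hi2 : i + 2 < k := by omega
    have hCi := hCmem i hi1
    have hCi1 := hCmem (i + 1) hi2
    have hab : C i < C (i + 1) := hCi.2.trans hCi1.1
    have hsubIoo : Icc (C i) (C (i + 1)) ⊆ Ioo (-1:ℝ) 1 := by
      intro x hx
      exact ⟨(hCrange i hi1).1.trans_le hx.1, hx.2.trans_lt (hCrange (i + 1) hi2).2⟩
    have hsubIcc : Icc (C i) (C (i + 1)) ⊆ Icc (-1:ℝ) 1 :=
      hsubIoo.trans Ioo_subset_Icc_self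
    have hlemA := lemA u u' u'' (C i) (C (i + 1)) (l * R₁) hab
      (fun x hx => (hC2.1 x (hsubIcc hx)).mono hsubIcc)
      (fun x hx => (hC2.2.1 x (hsubIcc hx)).mono hsubIcc)
      (by
        intro x hx
        have hxIoo := hsubIoo hx
        have heq : u'' x = -(l * r x * u x) := by linarith [hode x hxIoo]
        rw [heq, abs_neg, abs_mul, abs_mul]
        have hrx : 0 < r x := hrpos x (hsubIcc hx)
        rw [abs_of_pos hl, abs_of_pos hrx]
        have hrle := hmaxle x (hsubIcc hx)
        have : l * r x * |u x| ≤ l * R₁ * |u x| := by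
          gcongr
        linarith)
      (hCzero i hi1) (hCzero (i + 1) hi2)
      (by
        refine ⟨X (i + 1), ⟨hCi.2.le, hCi1.1.le⟩, ?_⟩
        intro hu0
        have hXi1 := hXmem (i + 1) hi1
        have h0 := hode (X (i + 1)) hXi1.1
        rw [hu0, mul_zero] at h0
        exact hsimple (X (i + 1)) hXi1.1 hXi1.2 (by linarith)
      )
    -- now combine
    have hgpos : 0 < C (i + 1) - C i := by linarith
    have hsq : (C (i + 1) - C i) ^ 2 ≤ (2 / n) ^ 2 := by
      apply pow_le_pow_left₀ hgpos.le hgaple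
    have h1 : 1 ≤ l * R₁ * (2 / n) ^ 2 := by
      refine hlemA.trans ?_
      exact mul_le_mul_of_nonneg_left hsq (by positivity)
    have hnk : 2 * √(R₁ * (Λ + 1)) + 1 ≤ (n:ℝ) := by
      have h2 : ⌈2 * √(R₁ * (Λ + 1))⌉₊ + 1 ≤ n := by omega
      have h3 : ((⌈2 * √(R₁ * (Λ + 1))⌉₊ : ℝ) + 1) ≤ (n:ℝ) := by exact_mod_cast h2
      linarith [Nat.le_ceil (2 * √(R₁ * (Λ + 1)))]
    have hsqq : 4 * (R₁ * (Λ + 1)) ≤ (n:ℝ) ^ 2 := by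
      have h0 : 0 ≤ √(R₁ * (Λ + 1)) := Real.sqrt_nonneg _
      nlinarith [Real.sq_sqrt (show (0:ℝ) ≤ R₁ * (Λ + 1) by positivity)]
    -- 1 ≤ l R₁ * 4/n²  ⇒  n² ≤ 4 l R₁  ⇒  4 R₁ (Λ+1) ≤ 4 l R₁ ⇒ Λ+1 ≤ l
    have h4 : (n:ℝ) ^ 2 ≤ 4 * (l * R₁) := by
      have h7 : (n:ℝ) ^ 2 * (l * R₁ * (2 / (n:ℝ)) ^ 2) = 4 * (l * R₁) := by
        field_simp
        ring
      have h8 := mul_le_mul_of_nonneg_left h1 (by positivity : (0:ℝ) ≤ (n:ℝ) ^ 2)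
      rw [h7] at h8
      linarith
    nlinarith
  refine ⟨hlow, ?_⟩
  -- UPPER BOUND
  by_contra hcon
  push_neg at hcon
  have hm : 0 < l * R₀ := by positivity
  set s : ℝ := √(l * R₀) with hsdef
  have hs0 : 0 < s := Real.sqrt_pos.mpr hm
  have hkR : (0:ℝ) < (k:ℝ) := by exact_mod_cast (by omega : 0 < k)
  have hsk : 3 * π * k < s := by
    rw [hsdef]
    rw [Real.lt_sqrt (by positivity)]
    have : 9 * π ^ 2 / R₀ * (k:ℝ) ^ 2 < l := hcon
    have h6 : 9 * π ^ 2 * (k:ℝ) ^ 2 < l * R₀ := by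
      rw [div_mul_eq_mul_div, div_lt_iff₀ hR₀] at this
      linarith
    calc (3 * π * (k:ℝ)) ^ 2 = 9 * π ^ 2 * (k:ℝ) ^ 2 := by ring
    _ < l * R₀ := h6
  set hh : ℝ := 1 / (3 * (k:ℝ)) with hhdef
  have hhpos : 0 < hh := by positivity
  clear_value s
  have hπs : π / s < hh := by
    rw [hhdef, div_lt_div_iff₀ hs0 (by positivity)]
    have := Real.pi_pos
    nlinarith
  have hπspos : 0 < π / s := div_pos Real.pi_pos hs0
  set A : ℕ → ℝ := fun j => -1 + 2 * j * hh with hAdef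
  have hAval : ∀ j : ℕ, A j = -1 + 2 * (j:ℝ) * hh := fun j => rfl
  have h6k : 6 * (k:ℝ) * hh = 2 := by rw [hhdef]; field_simp; ring
  clear_value A
  clear_value hh
  have hzeros : ∀ j, j < 3 * k → ∃ z ∈ Icc (A j) (A j + π / s), u z = 0 := by
    intro j hj
    by_contra hne
    push_neg at hne
    have hjR : (j:ℝ) + 1 ≤ 3 * (k:ℝ) := by exact_mod_cast hj
    have hA1 : -1 ≤ A j := by
      rw [hAval j]
      have : (0:ℝ) ≤ 2 * j * hh := by positivity
      linarith
    have hA2 : A j + π / s < 1 := by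
      rw [hAval j]
      have h8 : (2 * (j:ℝ) + 2) * hh ≤ 6 * (k:ℝ) * hh :=
        mul_le_mul_of_nonneg_right (by linarith) hhpos.le
      nlinarith [hπs, hhpos, h6k, h8]
    have hsub : Icc (A j) (A j + π / s) ⊆ Icc (-1:ℝ) 1 :=
      Icc_subset_Icc hA1 (by linarith)
    have hcu : ContinuousOn u (Icc (A j) (A j + π / s)) :=
      fun x hx => ((hC2.1 x (hsub hx)).mono hsub).continuousWithinAt
    have hsb : s * ((A j + π / s) - A j) = π := by
      rw [add_sub_cancel_left]
      field_simp
    have habj : A j < A j + π / s := by linarith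
    have hsubIoo : Ioo (A j) (A j + π / s) ⊆ Ioo (-1:ℝ) 1 := fun x hx =>
      ⟨hA1.trans_lt hx.1, hx.2.trans hA2⟩
    rcases sign_const u (A j) (A j + π / s) habj.le hcu hne with hpos | hneg
    · exact lemB u u' u'' (A j) (A j + π / s) (l * R₀) s hm habj hsdef hsb
        (fun x hx => (hC2.1 x (hsub hx)).mono hsub)
        (fun x hx => (hC2.2.1 x (hsub hx)).mono hsub)
        (by
          intro x hx
          have hxIoo := hsubIoo hx
          have heq := hode x hxIoo
          have hrx := hminle x (Ioo_subset_Icc_self hxIoo)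
          have hux := hpos x ⟨hx.1.le, hx.2.le⟩
          linarith [mul_le_mul_of_nonneg_right (mul_le_mul_of_nonneg_left hrx hl.le) hux.le])
        hpos
    · exact lemB (fun y => -u y) (fun y => -u' y) (fun y => -u'' y)
        (A j) (A j + π / s) (l * R₀) s hm habj hsdef hsb
        (fun x hx => ((hC2.1 x (hsub hx)).mono hsub).neg)
        (fun x hx => ((hC2.2.1 x (hsub hx)).mono hsub).neg)
        (by
          intro x hx
          have hxIoo := hsubIoo hx
          have heq := hode x hxIoo
          have hrx := hminle x (Ioo_subset_Icc_self hxIoo)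
          have hux := hneg x ⟨hx.1.le, hx.2.le⟩
          show -u'' x ≤ -(l * R₀) * (-u x)
          linarith [mul_le_mul_of_nonpos_right (mul_le_mul_of_nonneg_left hrx hl.le) hux.le])
        (fun x hx => by simpa using (hneg x hx))
  choose! z hz1 hz2 using hzeros
  have hzlt : ∀ j, j + 1 < 3 * k → z j < z (j + 1) := by
    intro j hj
    have hj1 : j < 3 * k := by omega
    have h1 := (hz1 j hj1).2
    have h2 := (hz1 (j + 1) hj).1
    have hAj : A j + hh = A (j + 1) - hh := by
      rw [hAval j, hAval (j + 1)]
      push_cast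
      ring
    have : z j ≤ A j + π / s := h1
    have h4 : A (j + 1) ≤ z (j + 1) := h2
    linarith
  have hzbound : ∀ j, j < 3 * k → -1 ≤ z j ∧ z j < 1 := by
    intro j hj
    have h1 := (hz1 j hj).1
    have h2 := (hz1 j hj).2
    have hjR : (j:ℝ) + 1 ≤ 3 * (k:ℝ) := by exact_mod_cast hj
    have hA1 : -1 ≤ A j := by
      rw [hAval j]
      have : (0:ℝ) ≤ 2 * j * hh := by positivity
      linarith
    have hA2 : A j + π / s < 1 := by
      rw [hAval j]
      have h8 : (2 * (j:ℝ) + 2) * hh ≤ 6 * (k:ℝ) * hh :=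
        mul_le_mul_of_nonneg_right (by linarith) hhpos.le
      nlinarith [hπs, hhpos, h6k, h8]
    exact ⟨hA1.trans h1, lt_of_le_of_lt h2 hA2⟩
  have hrolle : ∀ j, j + 1 < 3 * k → ∃ w ∈ Ioo (z j) (z (j + 1)), u' w = 0 := by
    intro j hj
    have hj1 : j < 3 * k := by omega
    have hb1 := hzbound j hj1
    have hb2 := hzbound (j + 1) hj
    have hsub : Icc (z j) (z (j + 1)) ⊆ Icc (-1:ℝ) 1 :=
      Icc_subset_Icc hb1.1 hb2.2.le
    refine exists_hasDerivAt_eq_zero (f := u) (f' := u') (hzlt j hj) ?_ ?_ ?_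
    · exact fun x hx => ((hC2.1 x (hsub hx)).mono hsub).continuousWithinAt
    · rw [hz2 j hj1, hz2 (j + 1) hj]
    · intro x hx
      have hxI : x ∈ Icc (-1:ℝ) 1 := hsub ⟨hx.1.le, hx.2.le⟩
      refine (hC2.1 x hxI).hasDerivAt (Icc_mem_nhds ?_ ?_)
      · exact hb1.1.trans_lt hx.1
      · exact hx.2.trans_le hb2.2.le
  choose! w hw1 hw2 using hrolle
  have hwZ : ∀ j, j + 1 < 3 * k → w j ∈ Z := by
    intro j hj
    have hb1 := hzbound j (by omega)
    have hb2 := hzbound (j + 1) hj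
    exact ⟨⟨hb1.1.trans_lt (hw1 j hj).1, (hw1 j hj).2.trans hb2.2⟩, hw2 j hj⟩
  have hwmono : ∀ i j, i < j → j + 1 < 3 * k → w i < w j := by
    intro i j hij hj
    have hi1 : i + 1 < 3 * k := by omega
    have h1 : w i < z (i + 1) := (hw1 i hi1).2
    have h2 : z j < w j := (hw1 j hj).1
    rcases Nat.lt_or_ge (i + 1) j with hc | hc
    · have h3 : z (i + 1) < z j :=
        aux_chain z (3 * k - 1) (fun a ha => hzlt a (by omega)) j (by omega) (i + 1) hc
      linarith
    · have : i + 1 = j := by omega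
      subst this
      linarith
  -- counting
  have hwin : Set.InjOn w (Finset.range (3 * k - 1) : Finset ℕ) := by
    intro i hi j hj hij
    simp only [Finset.coe_range, Set.mem_Iio] at hi hj
    by_contra hne'
    rcases Nat.lt_or_ge i j with h | h
    · exact absurd hij (hwmono i j h (by omega)).ne
    · have h' : j < i := by omega
      exact absurd hij.symm (hwmono j i h' (by omega)).ne
  have hsubF : (Finset.range (3 * k - 1)).image w ⊆ F := by
    intro y hy
    rw [Finset.mem_image] at hy
    obtain ⟨j, hj, rfl⟩ := hy
    rw [Finset.mem_range] at hj
    exact hZfin.mem_toFinset.mpr (hwZ j (by omega))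
  have hcount : 3 * k - 1 ≤ k := by
    have h1 : ((Finset.range (3 * k - 1)).image w).card = 3 * k - 1 := by
      rw [Finset.card_image_of_injOn hwin, Finset.card_range]
    have h2 := Finset.card_le_card hsubF
    rw [h1, hF] at h2
    exact h2
  omega
end
end

section
/- Let g : [-1,1] × ℝ → ℝ be continuous with g_min := inf g > 0, and fix the multi-point boundary data. Suppose λ > 0 and u is a twice continuously differentiable function on [-1,1], not identically zero, satisfying −u''(x) = λ g(x, u(x)) u(x) for all x ∈ (−1,1) together with the multi-point boundary conditions, and u ∈ T_k for some integer k ≥ 1. Then λ < Λ(k) := g_min^{−1} ((k+2)π/2)². -/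
open Set Real

noncomputable section

lemma my_sturm_pos (u u' u'' : ℝ → ℝ) (hu : C2I u u' u'') (β a : ℝ) (hβ : 0 < β)
    (ha : -1 ≤ a) (hb : a + Real.pi / β ≤ 1)
    (hpos : ∀ x ∈ Set.Ioc a (a + Real.pi / β), 0 < u x)
    (hq : ∀ x ∈ Set.Ioo a (a + Real.pi / β), β ^ 2 * u x ≤ -(u'' x)) : False := by
  set b := a + Real.pi / β with hbdef
  have hπβ : 0 < Real.pi / β := div_pos Real.pi_pos hβ
  have hab : a < b := by rw [hbdef]; linarith
  have hIcc : Set.Icc a b ⊆ Set.Icc (-1:ℝ) 1 := Set.Icc_subset_Icc ha hb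
  have hIoo : Set.Ioo a b ⊆ Set.Ioo (-1:ℝ) 1 := fun x hx => ⟨lt_of_le_of_lt ha hx.1, lt_of_lt_of_le hx.2 hb⟩
  have hcu : ContinuousOn u (Set.Icc (-1:ℝ) 1) :=
    fun x hx => (hu.1 x hx).differentiableWithinAt.continuousWithinAt
  have hcu' : ContinuousOn u' (Set.Icc (-1:ℝ) 1) :=
    fun x hx => (hu.2.1 x hx).differentiableWithinAt.continuousWithinAt
  -- derivative facts at interior points
  have hdu : ∀ x ∈ Set.Ioo a b, HasDerivAt u (u' x) x := by
    intro x hx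
    have hx' := hIoo hx
    exact (hu.1 x (Set.mem_Icc_of_Ioo hx')).hasDerivAt (Icc_mem_nhds hx'.1 hx'.2)
  have hdu' : ∀ x ∈ Set.Ioo a b, HasDerivAt u' (u'' x) x := by
    intro x hx
    have hx' := hIoo hx
    exact (hu.2.1 x (Set.mem_Icc_of_Ioo hx')).hasDerivAt (Icc_mem_nhds hx'.1 hx'.2)
  set W : ℝ → ℝ := fun x => u x * (β * Real.cos (β * (x - a))) - u' x * Real.sin (β * (x - a)) with hW
  have hinner : ∀ x : ℝ, HasDerivAt (fun y => β * (y - a)) β x := by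
    intro x
    simpa using ((hasDerivAt_id x).sub_const a).const_mul β
  have hsin : ∀ x : ℝ, HasDerivAt (fun y => Real.sin (β * (y - a))) (Real.cos (β * (x - a)) * β) x :=
    fun x => (Real.hasDerivAt_sin _).comp x (hinner x)
  have hcos : ∀ x : ℝ, HasDerivAt (fun y => Real.cos (β * (y - a))) (-Real.sin (β * (x - a)) * β) x :=
    fun x => (Real.hasDerivAt_cos _).comp x (hinner x)
  have hWd : ∀ x ∈ Set.Ioo a b, HasDerivAt W
      (((-(u'' x)) - β ^ 2 * u x) * Real.sin (β * (x - a))) x := by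
    intro x hx
    have h1 : HasDerivAt (fun y => u y * (β * Real.cos (β * (y - a))))
        (u' x * (β * Real.cos (β * (x - a))) + u x * (β * (-Real.sin (β * (x - a)) * β))) x :=
      (hdu x hx).mul (((hcos x).const_mul β))
    have h2 : HasDerivAt (fun y => u' y * Real.sin (β * (y - a)))
        (u'' x * Real.sin (β * (x - a)) + u' x * (Real.cos (β * (x - a)) * β)) x :=
      (hdu' x hx).mul (hsin x)
    have := h1.sub h2
    exact this.congr_deriv (by ring)
  have hctrig : Continuous fun y : ℝ => β * (y - a) :=
    continuous_const.mul (continuous_id.sub continuous_const)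
  have hWc : ContinuousOn W (Set.Icc a b) := by
    apply ContinuousOn.sub
    · exact ((hcu.mono hIcc).mul
        (Continuous.continuousOn (continuous_const.mul (Real.continuous_cos.comp hctrig))))
    · exact ((hcu'.mono hIcc).mul
        (Continuous.continuousOn (Real.continuous_sin.comp hctrig)))
  have hmono : MonotoneOn W (Set.Icc a b) := by
    apply monotoneOn_of_deriv_nonneg (convex_Icc a b) hWc
    · intro x hx
      rw [interior_Icc] at hx
      exact (hWd x hx).differentiableAt.differentiableWithinAt
    · intro x hx
      rw [interior_Icc] at hx
      rw [(hWd x hx).deriv]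
      have hsin_nn : 0 ≤ Real.sin (β * (x - a)) := by
        apply Real.sin_nonneg_of_nonneg_of_le_pi
        · nlinarith [hx.1]
        · have : x - a < Real.pi / β := by have := hx.2; rw [hbdef] at this; linarith
          calc β * (x - a) ≤ β * (Real.pi / β) := by nlinarith
          _ = Real.pi := by field_simp
      have := hq x hx
      nlinarith
  -- endpoint values
  have hWa : W a = β * u a := by
    simp [hW]; ring
  have hWb : W b = -(β * u b) := by
    have : β * (b - a) = Real.pi := by rw [hbdef]; field_simp; ring
    simp [hW, this]
    ring
  have hua : 0 ≤ u a := by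
    by_contra hua
    push_neg at hua
    have hub : 0 < u b := hpos b ⟨hab, le_refl b⟩
    have := intermediate_value_Ioo (le_of_lt hab) (hcu.mono hIcc)
    have h0 : (0:ℝ) ∈ Set.Ioo (u a) (u b) := ⟨hua, hub⟩
    obtain ⟨x, hx, hx0⟩ := this h0
    exact absurd hx0 (ne_of_gt (hpos x (Set.Ioo_subset_Ioc_self hx)))
  have hle := hmono (Set.left_mem_Icc.2 (le_of_lt hab)) (Set.right_mem_Icc.2 (le_of_lt hab)) (le_of_lt hab)
  rw [hWa, hWb] at hle
  have hub : 0 < u b := hpos b ⟨hab, le_refl b⟩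
  nlinarith

lemma my_sturm (u u' u'' : ℝ → ℝ) (hu : C2I u u' u'') (β a : ℝ) (hβ : 0 < β)
    (ha : -1 ≤ a) (hb : a + Real.pi / β ≤ 1)
    (hode : ∀ x ∈ Set.Ioo a (a + Real.pi / β), ∃ q, β ^ 2 ≤ q ∧ -(u'' x) = q * u x) :
    ∃ z ∈ Set.Ioc a (a + Real.pi / β), u z = 0 := by
  by_contra hcon
  push_neg at hcon
  set b := a + Real.pi / β with hbdef
  have hπβ : 0 < Real.pi / β := div_pos Real.pi_pos hβ
  have hab : a < b := by rw [hbdef]; linarith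
  have hIcc : Set.Icc a b ⊆ Set.Icc (-1:ℝ) 1 := Set.Icc_subset_Icc ha hb
  have hcu : ContinuousOn u (Set.Icc a b) :=
    fun x hx => ((hu.1 x (hIcc hx)).differentiableWithinAt.continuousWithinAt).mono hIcc
  have hub : u b ≠ 0 := hcon b ⟨hab, le_refl b⟩
  rcases hub.lt_or_gt with hneg | hpos
  · -- u < 0 on Ioc a b
    have hall : ∀ x ∈ Set.Ioc a b, u x < 0 := by
      intro y hy
      rcases (hcon y hy).lt_or_gt with h | h
      · exact h
      · exfalso
        rcases eq_or_lt_of_le hy.2 with rfl | hyb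
        · exact absurd h (not_lt.2 (le_of_lt hneg))
        · obtain ⟨x, hx, hx0⟩ := intermediate_value_Ioo' (le_of_lt hyb)
            (hcu.mono (Set.Icc_subset_Icc (le_of_lt hy.1) (le_refl b)))
            (⟨hneg, h⟩ : (0:ℝ) ∈ Set.Ioo (u b) (u y))
          exact hcon x ⟨lt_trans hy.1 hx.1, le_of_lt hx.2⟩ hx0
    have hC2 : C2I (fun x => -u x) (fun x => -u' x) (fun x => -u'' x) :=
      ⟨fun x hx => (hu.1 x hx).neg, fun x hx => (hu.2.1 x hx).neg, hu.2.2.neg⟩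
    apply my_sturm_pos _ _ _ hC2 β a hβ ha hb
    · intro x hx
      simpa using hall x hx
    · intro x hx
      obtain ⟨q, hq1, hq2⟩ := hode x hx
      have hux : u x < 0 := hall x (Set.Ioo_subset_Ioc_self hx)
      simp only [neg_neg]
      nlinarith
  · have hall : ∀ x ∈ Set.Ioc a b, 0 < u x := by
      intro y hy
      rcases (hcon y hy).lt_or_gt with h | h
      · exfalso
        rcases eq_or_lt_of_le hy.2 with rfl | hyb
        · exact absurd h (not_lt.2 (le_of_lt hpos))
        · obtain ⟨x, hx, hx0⟩ := intermediate_value_Ioo (le_of_lt hyb)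
            (hcu.mono (Set.Icc_subset_Icc (le_of_lt hy.1) (le_refl b)))
            (⟨h, hpos⟩ : (0:ℝ) ∈ Set.Ioo (u y) (u b))
          exact hcon x ⟨lt_trans hy.1 hx.1, le_of_lt hx.2⟩ hx0
      · exact h
    apply my_sturm_pos _ _ _ hu β a hβ ha hb hall
    intro x hx
    obtain ⟨q, hq1, hq2⟩ := hode x hx
    have hux : 0 < u x := hall x (Set.Ioo_subset_Ioc_self hx)
    nlinarith

theorem stmt18
    (g : ℝ → ℝ → ℝ)
    (hg : ContinuousOn (fun p : ℝ × ℝ => g p.1 p.2) (Set.Icc (-1:ℝ) 1 ×ˢ Set.univ))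
    (gmin : ℝ)
    (hgmin : IsGLB ((fun p : ℝ × ℝ => g p.1 p.2) '' (Set.Icc (-1:ℝ) 1 ×ˢ Set.univ)) gmin)
    (hgminpos : 0 < gmin)
    (mneg mpos : ℕ) (hmneg : 1 ≤ mneg) (hmpos : 1 ≤ mpos)
    (αneg : Fin mneg → ℝ) (αpos : Fin mpos → ℝ)
    (ηneg : Fin mneg → ℝ) (ηpos : Fin mpos → ℝ)
    (hηneg : ∀ i, ηneg i ∈ Set.Icc (-1:ℝ) 1 ∧ ηneg i ≠ -1)
    (hηpos : ∀ i, ηpos i ∈ Set.Icc (-1:ℝ) 1 ∧ ηpos i ≠ 1)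
    (l : ℝ) (hl : 0 < l)
    (u u' u'' : ℝ → ℝ) (hu : C2I u u' u'')
    (hnt : ∃ x ∈ Set.Icc (-1:ℝ) 1, u x ≠ 0)
    (hode : ∀ x ∈ Set.Ioo (-1:ℝ) 1, -(u'' x) = l * g x (u x) * u x)
    (hbcneg : u (-1) = ∑ i, αneg i * u (ηneg i))
    (hbcpos : u 1 = ∑ i, αpos i * u (ηpos i))
    (k : ℕ) (hk : 1 ≤ k)
    (hT : InTk k 1 u u' u'' ∨ InTk k (-1) u u' u'') :
    l < gmin⁻¹ * (((k : ℝ) + 2) * Real.pi / 2) ^ 2 := by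
  by_contra hcontra
  push_neg at hcontra
  set β : ℝ := ((k : ℝ) + 2) * Real.pi / 2 with hβdef
  have hk2pos : (0:ℝ) < (k : ℝ) + 2 := by positivity
  have hβpos : 0 < β := by
    rw [hβdef]; positivity
  have hLval : Real.pi / β = 2 / ((k : ℝ) + 2) := by
    rw [hβdef]
    field_simp
  set L : ℝ := Real.pi / β with hLdef
  have hLpos : 0 < L := by rw [hLdef]; positivity
  -- the grid
  set grid : ℕ → ℝ := fun j => -1 + j * L with hgrid
  have hgrid_mono : ∀ i j : ℕ, i ≤ j → grid i ≤ grid j := by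
    intro i j hij
    simp only [hgrid]
    have : (i:ℝ) ≤ j := by exact_mod_cast hij
    nlinarith
  have hgrid_last : grid (k + 2) = 1 := by
    simp only [hgrid, hLdef, hLval]
    push_cast
    field_simp
    rw [hβdef]; ring
  have hgrid_lb : ∀ j : ℕ, -1 ≤ grid j := by
    intro j
    simp only [hgrid]
    have : (0:ℝ) ≤ (j:ℝ) * L := by positivity
    linarith
  have hgrid_succ : ∀ j : ℕ, grid (j + 1) = grid j + L := by
    intro j
    simp only [hgrid]
    push_cast
    ring
  -- q ≥ β² on (-1,1)
  have hqlb : ∀ x ∈ Set.Ioo (-1:ℝ) 1, β ^ 2 ≤ l * g x (u x) := by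
    intro x hx
    have hg1 : gmin ≤ g x (u x) :=
      hgmin.1 ⟨(x, u x), ⟨Set.mem_Icc_of_Ioo hx, Set.mem_univ _⟩, rfl⟩
    have h1 : gmin * gmin⁻¹ = 1 := mul_inv_cancel₀ (ne_of_gt hgminpos)
    nlinarith [sq_nonneg β, hcontra]
  -- zeros of u
  have hZex : ∀ j : ℕ, ∃ z, j < k + 2 →
      z ∈ Set.Ioc (grid j) (grid (j + 1)) ∧ u z = 0 := by
    intro j
    by_cases hj : j < k + 2
    · have hb1 : grid j + L ≤ 1 := by
        rw [← hgrid_succ j, ← hgrid_last]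
        exact hgrid_mono _ _ (by omega)
      obtain ⟨z, hz1, hz2⟩ := my_sturm u u' u'' hu β (grid j) hβpos (hgrid_lb j)
        (by rw [← hLdef]; exact hb1)
        (by
          intro x hx
          rw [← hLdef] at hx
          have hxm : x ∈ Set.Ioo (-1:ℝ) 1 :=
            ⟨lt_of_le_of_lt (hgrid_lb j) hx.1, lt_of_lt_of_le hx.2 hb1⟩
          exact ⟨l * g x (u x), hqlb x hxm, hode x hxm⟩)
      refine ⟨z, fun _ => ⟨?_, hz2⟩⟩
      rw [hgrid_succ j]
      rw [← hLdef] at hz1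
      exact hz1
    · exact ⟨0, fun h => absurd h hj⟩
  choose Z hZ using hZex
  have hZlb : ∀ j, j < k + 2 → grid j < Z j := fun j hj => ((hZ j hj).1).1
  have hZub : ∀ j, j < k + 2 → Z j ≤ grid (j + 1) := fun j hj => ((hZ j hj).1).2
  have hZmono : ∀ i j, i < j → j < k + 2 → Z i < Z j := by
    intro i j hij hj
    calc Z i ≤ grid (i + 1) := hZub i (by omega)
    _ ≤ grid j := hgrid_mono _ _ (by omega)
    _ < Z j := hZlb j hj
  -- Rolle
  have hcu : ContinuousOn u (Set.Icc (-1:ℝ) 1) :=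
    fun x hx => (hu.1 x hx).differentiableWithinAt.continuousWithinAt
  have hZIoo : ∀ j, j < k + 2 → Z j ∈ Set.Ioc (-1:ℝ) 1 := by
    intro j hj
    constructor
    · exact lt_of_le_of_lt (hgrid_lb j) (hZlb j hj)
    · calc Z j ≤ grid (j + 1) := hZub j hj
      _ ≤ grid (k + 2) := hgrid_mono _ _ (by omega)
      _ = 1 := hgrid_last
  have hCex : ∀ j : ℕ, ∃ c, j < k + 1 →
      c ∈ Set.Ioo (Z j) (Z (j + 1)) ∧ u' c = 0 := by
    intro j
    by_cases hj : j < k + 1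
    · have hlt : Z j < Z (j + 1) := hZmono j (j + 1) (by omega) (by omega)
      have hsub : Set.Icc (Z j) (Z (j + 1)) ⊆ Set.Icc (-1:ℝ) 1 :=
        Set.Icc_subset_Icc (le_of_lt (hZIoo j (by omega)).1) (hZIoo (j + 1) (by omega)).2
      have heq : u (Z j) = u (Z (j + 1)) := by
        rw [(hZ j (by omega)).2, (hZ (j + 1) (by omega)).2]
      obtain ⟨c, hc1, hc2⟩ := exists_hasDerivAt_eq_zero hlt (hcu.mono hsub) heq
        (by
          intro x hx
          have hxm : x ∈ Set.Ioo (-1:ℝ) 1 :=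
            ⟨lt_trans (hZIoo j (by omega)).1 hx.1, lt_of_lt_of_le hx.2 (hZIoo (j + 1) (by omega)).2⟩
          exact (hu.1 x (Set.mem_Icc_of_Ioo hxm)).hasDerivAt (Icc_mem_nhds hxm.1 hxm.2))
      exact ⟨c, fun _ => ⟨hc1, hc2⟩⟩
    · exact ⟨0, fun h => absurd h hj⟩
  choose C hC using hCex
  have hCmono : ∀ i j, i < j → j < k + 1 → C i < C j := by
    intro i j hij hj
    have h1 : C i < Z (i + 1) := ((hC i (by omega)).1).2
    have h2 : Z j < C j := ((hC j hj).1).1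
    have h3 : Z (i + 1) ≤ Z j := by
      rcases eq_or_lt_of_le (Nat.succ_le_of_lt hij) with h | h
      · exact le_of_eq (congrArg Z h)
      · exact le_of_lt (hZmono _ _ h (by omega))
    linarith
  have hCmem : ∀ j, j < k + 1 → C j ∈ Set.Ioo (-1:ℝ) 1 ∧ u' (C j) = 0 := by
    intro j hj
    refine ⟨⟨lt_trans (hZIoo j (by omega)).1 ((hC j hj).1).1,
      lt_of_lt_of_le ((hC j hj).1).2 (hZIoo (j + 1) (by omega)).2⟩, (hC j hj).2⟩
  -- counting
  set S := {x ∈ Set.Ioo (-1:ℝ) 1 | u' x = 0} with hSdef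
  have hS : S.ncard = k := by
    rcases hT with h | h
    · exact h.2.1.2
    · exact h.2.1.2
  have hSfin : S.Finite := by
    by_contra hinf
    rw [Set.Infinite.ncard hinf] at hS
    omega
  set T : Finset ℝ := (Finset.range (k + 1)).image C with hTdef
  have hTcard : T.card = k + 1 := by
    rw [hTdef, Finset.card_image_of_injOn, Finset.card_range]
    intro i hi j hj hij
    simp only [Finset.coe_range, Set.mem_Iio] at hi hj
    by_contra hne
    rcases lt_or_gt_of_ne hne with h | h
    · exact absurd hij (ne_of_lt (hCmono i j h hj))
    · exact absurd hij.symm (ne_of_lt (hCmono j i h hi))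
  have hTsub : (T : Set ℝ) ⊆ S := by
    intro x hx
    simp only [hTdef, Finset.coe_image, Finset.coe_range, Set.mem_image, Set.mem_Iio] at hx
    obtain ⟨j, hj, rfl⟩ := hx
    exact ⟨(hCmem j hj).1, (hCmem j hj).2⟩
  have := Set.ncard_le_ncard hTsub hSfin
  rw [Set.ncard_coe_finset, hTcard, hS] at this
  omega
end
end
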